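/- Let r ∈ (0,1), let F_r : (0,r) → ℝ be integrable with F_r(ρ) > 0 for almost every ρ ∈ (0,r), and let u : ℝ → ℝ be the indicator function of the interval (−1,1). Then (A_r u)(x) < 0 for every x ∈ (1−r, 1). -/

import Mathlib

/-! Pairing `ξ` with `-ξ` gives
`(A_r u)(x) = (2r²)⁻¹ ∫₀ʳ (u(x+ρ) - u(x-ρ)) F_r(ρ) dρ`.
For `u` the indicator of `(-1, 1)` and `x ∈ (1 - r, 1)`, the point `x - ρ` stays in `(-1, 1)`
because `r < 1`, while `x + ρ` leaves it exactly when `ρ ≥ 1 - x`. Hence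
`(A_r u)(x) = -(2r²)⁻¹ ∫_{1-x}^r F_r`, which is negative since `F_r > 0` a.e. -/

open MeasureTheory

/-- The one-dimensional adhesion operator
`(A_r u)(x) = (1/(2r²)) ∫_{−r}^{r} u(x+ξ) sign(ξ) F_r(|ξ|) dξ`. -/
noncomputable def adhesion1D (r : ℝ) (Fr : ℝ → ℝ) (u : ℝ → ℝ) (x : ℝ) : ℝ :=
  (2 * r ^ 2)⁻¹ * ∫ ξ in (-r)..r, u (x + ξ) * Real.sign ξ * Fr |ξ|

open Set

lemma Real.measurable_sign : Measurable Real.sign :=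
  Measurable.ite measurableSet_Iio measurable_const
    (Measurable.ite measurableSet_Ioi measurable_const measurable_const)

lemma Real.abs_sign_le_one (x : ℝ) : |Real.sign x| ≤ 1 := by
  rcases Real.sign_apply_eq x with h | h | h <;> simp [h]

lemma IntervalIntegrable.bdd_mul {μ : Measure ℝ} {a b C : ℝ} {f g : ℝ → ℝ}
    (hg : IntervalIntegrable g μ a b) (hf : Measurable f) (hfC : ∀ x, |f x| ≤ C) :
    IntervalIntegrable (fun x => f x * g x) μ a b :=
  ⟨hg.1.bdd_mul hf.aestronglyMeasurable (ae_of_all _ hfC),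
    hg.2.bdd_mul hf.aestronglyMeasurable (ae_of_all _ hfC)⟩

lemma IntervalIntegrable.comp_abs {r : ℝ} {F : ℝ → ℝ} (hr : 0 ≤ r)
    (hF : IntervalIntegrable F volume 0 r) :
    IntervalIntegrable (fun ξ => F |ξ|) volume (-r) r := by
  have hneg : IntervalIntegrable (fun ξ => F |ξ|) volume (-r) 0 := by
    have hreflect : IntervalIntegrable (fun ξ => F (-ξ)) volume (-r) 0 := by
      simpa using ((IntervalIntegrable.iff_comp_neg (f := F)).1 hF).symm
    refine IntervalIntegrable.congr (fun ξ hξ => ?_) hreflect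
    rw [uIoc_of_le (by linarith)] at hξ
    simp [abs_of_nonpos hξ.2]
  refine hneg.trans (IntervalIntegrable.congr (fun ξ hξ => ?_) hF)
  rw [uIoc_of_le hr] at hξ
  simp [abs_of_pos hξ.1]

lemma intervalIntegral.integral_symmetric_eq_integral_add_comp_neg {r : ℝ} {f : ℝ → ℝ}
    (hf : IntervalIntegrable f volume (-r) r) :
    ∫ ξ in (-r)..r, f ξ = ∫ ρ in 0..r, (f ρ + f (-ρ)) := by
  have hzero : (0 : ℝ) ∈ uIcc (-r) r :=
    mem_uIcc.2 ((le_total 0 r).imp (fun h => ⟨by linarith, h⟩) fun h => ⟨h, by linarith⟩)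
  have hleft : IntervalIntegrable f volume (-r) 0 :=
    hf.mono_set (uIcc_subset_uIcc left_mem_uIcc hzero)
  have hright : IntervalIntegrable f volume 0 r :=
    hf.mono_set (uIcc_subset_uIcc hzero right_mem_uIcc)
  have hreflect : IntervalIntegrable (fun ρ => f (-ρ)) volume 0 r := by
    simpa using ((IntervalIntegrable.iff_comp_neg (f := f)).1 hleft).symm
  rw [← integral_add_adjacent_intervals hleft hright, integral_add hright hreflect,
    integral_comp_neg, neg_zero, add_comm]

lemma intervalIntegral.integral_pos_of_ae_pos {a b : ℝ} {f : ℝ → ℝ} (hab : a < b)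
    (hf : IntervalIntegrable f volume a b) (hpos : ∀ᵐ x ∂volume.restrict (Ioo a b), 0 < f x) :
    0 < ∫ x in a..b, f x := by
  have hpos' : ∀ᵐ x, x ∈ Ioo a b → 0 < f x := (ae_restrict_iff' measurableSet_Ioo).1 hpos
  have hnonneg : 0 ≤ᵐ[volume.restrict (uIoc a b)] f := by
    rw [uIoc_of_le hab.le, ← restrict_Ioo_eq_restrict_Ioc]
    exact hpos.mono fun x hx => hx.le
  have hsupp : volume (Ioo a b) ≤ volume (Function.support f ∩ Ioc a b) :=
    measure_mono_ae <| hpos'.mono fun x hx hmem => ⟨(hx hmem).ne', Ioo_subset_Ioc_self hmem⟩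
  rw [integral_pos_iff_support_of_nonneg_ae' hnonneg hf]
  exact ⟨hab, ((Measure.measure_Ioo_pos _).2 hab).trans_le hsupp⟩

lemma adhesion1D_eq_integral_sub {r C : ℝ} {F u : ℝ → ℝ} (hr : 0 ≤ r)
    (hF : IntervalIntegrable F volume 0 r) (hu : Measurable u) (huC : ∀ y, |u y| ≤ C)
    (x : ℝ) :
    adhesion1D r F u x = (2 * r ^ 2)⁻¹ * ∫ ρ in 0..r, (u (x + ρ) - u (x - ρ)) * F ρ := by
  have hint : IntervalIntegrable (fun ξ => u (x + ξ) * Real.sign ξ * F |ξ|) volume (-r) r := by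
    refine (hF.comp_abs hr).bdd_mul (C := C)
      ((hu.comp (measurable_const_add x)).mul Real.measurable_sign) fun ξ => ?_
    rw [abs_mul]
    exact (mul_le_of_le_one_right (abs_nonneg _) (Real.abs_sign_le_one ξ)).trans (huC _)
  rw [adhesion1D, intervalIntegral.integral_symmetric_eq_integral_add_comp_neg hint]
  congr 1
  refine intervalIntegral.integral_congr fun ρ hρ => ?_
  rw [uIcc_of_le hr] at hρ
  rcases hρ.1.eq_or_lt with h | h
  · simp [← h]
  · simp only [Real.sign_neg, Real.sign_of_pos h, abs_neg, abs_of_pos h, ← sub_eq_add_neg]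
    ring

lemma integral_indicator_Ioo_sub_mul {a b r x : ℝ} {F : ℝ → ℝ} (hab : a + 2 * r ≤ b)
    (hx : x ∈ Ioo (b - r) b) (hF : IntervalIntegrable F volume 0 r) :
    ∫ ρ in 0..r, ((Ioo a b).indicator (fun _ => (1 : ℝ)) (x + ρ) -
      (Ioo a b).indicator (fun _ => (1 : ℝ)) (x - ρ)) * F ρ = -∫ ρ in (b - x)..r, F ρ := by
  obtain ⟨hxl, hxr⟩ := hx
  set u : ℝ → ℝ := (Ioo a b).indicator fun _ => 1 with hu
  have hg : IntervalIntegrable (fun ρ => (u (x + ρ) - u (x - ρ)) * F ρ) volume 0 r := by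
    refine hF.bdd_mul (C := 1) (by measurability) fun ρ => ?_
    simp only [hu, indicator]
    split_ifs <;> norm_num
  have hs : b - x ∈ uIcc 0 r := mem_uIcc_of_le (by linarith) (by linarith)
  have hinner : ∫ ρ in 0..(b - x), (u (x + ρ) - u (x - ρ)) * F ρ = 0 := by
    refine (intervalIntegral.integral_congr_Ioo_of_le (by linarith) fun ρ hρ => ?_).trans
      intervalIntegral.integral_zero
    obtain ⟨hρl, hρr⟩ := hρ
    rw [hu, indicator_of_mem (show x + ρ ∈ Ioo a b from ⟨by linarith, by linarith⟩),
      indicator_of_mem (show x - ρ ∈ Ioo a b from ⟨by linarith, by linarith⟩), sub_self, zero_mul]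
  have houter : ∫ ρ in (b - x)..r, (u (x + ρ) - u (x - ρ)) * F ρ = ∫ ρ in (b - x)..r, -F ρ := by
    refine intervalIntegral.integral_congr_Ioo_of_le (by linarith) fun ρ hρ => ?_
    obtain ⟨hρl, hρr⟩ := hρ
    rw [hu, indicator_of_notMem (show x + ρ ∉ Ioo a b from fun h => by linarith [h.2]),
      indicator_of_mem (show x - ρ ∈ Ioo a b from ⟨by linarith, by linarith⟩)]
    ring
  rw [← intervalIntegral.integral_add_adjacent_intervals
    (hg.mono_set (uIcc_subset_uIcc left_mem_uIcc hs))
    (hg.mono_set (uIcc_subset_uIcc hs right_mem_uIcc)), hinner, houter, zero_add,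
    intervalIntegral.integral_neg]

lemma adhesion1D_indicator_Ioo {a b r x : ℝ} {F : ℝ → ℝ} (hab : a + 2 * r ≤ b)
    (hx : x ∈ Ioo (b - r) b) (hF : IntervalIntegrable F volume 0 r) :
    adhesion1D r F ((Ioo a b).indicator fun _ => 1) x =
      -((2 * r ^ 2)⁻¹ * ∫ ρ in (b - x)..r, F ρ) := by
  have hr : 0 ≤ r := by linarith [hx.1, hx.2]
  rw [adhesion1D_eq_integral_sub hr hF (measurable_const.indicator measurableSet_Ioo)
    (C := 1) (fun y => (norm_indicator_le_norm_self (fun _ => (1 : ℝ)) y).trans_eq norm_one),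
    integral_indicator_Ioo_sub_mul hab hx hF, mul_neg]

theorem adhesion1D_indicator_neg_in_boundary_layer
    (r : ℝ) (hr : r ∈ Set.Ioo (0 : ℝ) 1)
    (Fr : ℝ → ℝ) (hF : IntegrableOn Fr (Set.Ioo 0 r))
    (hFpos : ∀ᵐ ρ ∂(volume.restrict (Set.Ioo (0 : ℝ) r)), 0 < Fr ρ)
    (u : ℝ → ℝ) (hu : u = Set.indicator (Set.Ioo (-1 : ℝ) 1) fun _ => (1 : ℝ)) :
    ∀ x ∈ Set.Ioo (1 - r) 1, adhesion1D r Fr u x < 0 := by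
  intro x hx
  obtain ⟨hr0, hr1⟩ := hr
  obtain ⟨hxl, hxr⟩ := hx
  have hFint : IntervalIntegrable Fr volume 0 r :=
    (intervalIntegrable_iff_integrableOn_Ioo_of_le hr0.le).2 hF
  have htail : 0 < ∫ ρ in (1 - x)..r, Fr ρ :=
    intervalIntegral.integral_pos_of_ae_pos (by linarith)
      (hFint.mono_set (uIcc_subset_uIcc (mem_uIcc_of_le (by linarith) (by linarith))
        right_mem_uIcc))
      (ae_restrict_of_ae_restrict_of_subset (Ioo_subset_Ioo (by linarith) le_rfl) hFpos)
  rw [hu, adhesion1D_indicator_Ioo (by linarith) ⟨hxl, hxr⟩ hFint, neg_lt_zero]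
  exact mul_pos (by positivity) htail
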